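/- arXiv:0706.1396 — 3 statements merged into one kernel-verified Lean document; each statement's English description precedes it below -/
import Mathlib

section
/- Basic Perturbation Lemma: Let (F, G, H) be a contraction of (N, d_N) onto (M, d_M) satisfying the side conditions F H = 0, H G = 0, H H = 0. Let t : N → N be a degree +1 perturbation such that (d_N + t)² = 0 and t∘H is locally nilpotent. Define X = Σ_{i≥0} (−1)^i t (H t)^i, F_t = F(1 − X H), G_t = (1 − H X) G, H_t = H − H X H, and (d_M)_t = d_M + F X G. Then (d_M)_t² = 0, F_t and G_t are chain maps with respect to the new differentials, F_t G_t = id_M, id_N − G_t F_t = (d_N + t) H_t + H_t (d_N + t), and the side conditions F_t H_t = 0, H_t G_t = 0, H_t H_t = 0 hold. -/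
/- STATEMENT 1 (Basic Perturbation Lemma).  A contraction (F, G, H) of (N, d_N) onto
(M, d_M) satisfying the side conditions, together with a perturbation t of d_N such that
t ∘ H is locally nilpotent, yields a perturbed contraction
(F_t, G_t, H_t) of (N, d_N + t) onto (M, d_M + F X G), where
X = Σ_{i ≥ 0} (-1)^i t (H t)^i.  The map X is specified by the property that it agrees
with the truncated sums on elements killed by high powers of t ∘ H.
(Complexes are modeled as modules with square-zero differential.) -/
theorem stmt1 {k : Type*} [Field k] [CharZero k]
    {N M : Type*} [AddCommGroup N] [Module k N] [AddCommGroup M] [Module k M]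
    (dN : N →ₗ[k] N) (dM : M →ₗ[k] M)
    (hdN : dN ∘ₗ dN = 0) (hdM : dM ∘ₗ dM = 0)
    (F : N →ₗ[k] M) (G : M →ₗ[k] N) (H : N →ₗ[k] N)
    (hF : dM ∘ₗ F = F ∘ₗ dN) (hG : dN ∘ₗ G = G ∘ₗ dM)
    (hFG : F ∘ₗ G = LinearMap.id)
    (hH : (LinearMap.id : N →ₗ[k] N) - G ∘ₗ F = dN ∘ₗ H + H ∘ₗ dN)
    (hFH : F ∘ₗ H = 0) (hHG : H ∘ₗ G = 0) (hHH : H ∘ₗ H = 0)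
    -- the perturbation
    (t : N →ₗ[k] N) (hdt : (dN + t) ∘ₗ (dN + t) = 0)
    (hnil : ∀ x : N, ∃ m : ℕ, ((t ∘ₗ H) ^ m) x = 0)
    -- X = Σ_{i≥0} (-1)^i t (H t)^i = Σ_{i≥0} (-1)^i (t H)^i t
    (X : N →ₗ[k] N)
    (hX : ∀ (x : N) (m : ℕ), ((t ∘ₗ H) ^ m) (t x) = 0 →
      X x = ∑ i ∈ Finset.range m, ((-1 : ℤ) ^ i : ℤ) • (((t ∘ₗ H) ^ i) (t x))) :
    ∀ Ft : N →ₗ[k] M, ∀ Gt : M →ₗ[k] N, ∀ Ht : N →ₗ[k] N, ∀ dMt : M →ₗ[k] M,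
      Ft = F ∘ₗ (LinearMap.id - X ∘ₗ H) →
      Gt = (LinearMap.id - H ∘ₗ X) ∘ₗ G →
      Ht = H - H ∘ₗ X ∘ₗ H →
      dMt = dM + F ∘ₗ X ∘ₗ G →
      (dMt ∘ₗ dMt = 0 ∧
       dMt ∘ₗ Ft = Ft ∘ₗ (dN + t) ∧
       (dN + t) ∘ₗ Gt = Gt ∘ₗ dMt ∧
       Ft ∘ₗ Gt = LinearMap.id ∧
       (LinearMap.id : N →ₗ[k] N) - Gt ∘ₗ Ft = (dN + t) ∘ₗ Ht + Ht ∘ₗ (dN + t) ∧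
       Ft ∘ₗ Ht = 0 ∧ Ht ∘ₗ Gt = 0 ∧ Ht ∘ₗ Ht = 0) := by
  intro Ft Gt Ht dMt hFt hGt hHt hdMt
  subst hFt hGt hHt hdMt
  -- pointwise forms of the hypotheses
  have h1 : ∀ y : N, dN (dN y) = 0 := fun y => by
    have := LinearMap.ext_iff.mp hdN y; simpa using this
  have h2 : ∀ y : M, dM (dM y) = 0 := fun y => by
    have := LinearMap.ext_iff.mp hdM y; simpa using this
  have h3 : ∀ y : N, dM (F y) = F (dN y) := fun y => by
    have := LinearMap.ext_iff.mp hF y; simpa using this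
  have h4 : ∀ y : M, dN (G y) = G (dM y) := fun y => by
    have := LinearMap.ext_iff.mp hG y; simpa using this
  have h5 : ∀ y : M, F (G y) = y := fun y => by
    have := LinearMap.ext_iff.mp hFG y; simpa using this
  have h6 : ∀ y : N, y - G (F y) = dN (H y) + H (dN y) := fun y => by
    have := LinearMap.ext_iff.mp hH y; simpa using this
  have h7 : ∀ y : N, F (H y) = 0 := fun y => by
    have := LinearMap.ext_iff.mp hFH y; simpa using this
  have h8 : ∀ y : M, H (G y) = 0 := fun y => by
    have := LinearMap.ext_iff.mp hHG y; simpa using this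
  have h9 : ∀ y : N, H (H y) = 0 := fun y => by
    have := LinearMap.ext_iff.mp hHH y; simpa using this
  have h10 : ∀ y : N, dN (t y) = -t (dN y) - t (t y) := fun y => by
    have h := LinearMap.ext_iff.mp hdt y
    simp only [LinearMap.comp_apply, LinearMap.add_apply, LinearMap.zero_apply, map_add] at h
    rw [h1 y] at h
    linear_combination (norm := abel1) h
  have h6' : ∀ y : N, dN (H y) = y - G (F y) - H (dN y) := fun y => by
    have h := h6 y
    linear_combination (norm := abel1) -h
  -- key recursions for X
  have e2 : ∀ y : N, X (H (t y)) = t y - X y := by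
    intro y
    obtain ⟨m, hm⟩ := hnil (t y)
    have hm1 : ((t ∘ₗ H) ^ (m + 1)) (t y) = 0 := by
      rw [pow_succ', Module.End.mul_apply, hm, map_zero]
    have hXy : X y = ∑ i ∈ Finset.range (m + 1),
        ((-1 : ℤ) ^ i : ℤ) • (((t ∘ₗ H) ^ i) (t y)) := hX y (m + 1) hm1
    have hHt0 : ((t ∘ₗ H) ^ m) (t (H (t y))) = 0 := by
      have : t (H (t y)) = (t ∘ₗ H) (t y) := rfl
      rw [this, ← Module.End.mul_apply, ← pow_succ]
      exact hm1
    have hXHt : X (H (t y)) = ∑ i ∈ Finset.range m,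
        ((-1 : ℤ) ^ i : ℤ) • (((t ∘ₗ H) ^ i) (t (H (t y)))) := hX (H (t y)) m hHt0
    have hterm : ∀ i : ℕ, ((-1 : ℤ) ^ (i + 1) : ℤ) • (((t ∘ₗ H) ^ (i + 1)) (t y))
        = -(((-1 : ℤ) ^ i : ℤ) • (((t ∘ₗ H) ^ i) (t (H (t y))))) := by
      intro i
      have hv : ((t ∘ₗ H) ^ (i + 1)) (t y) = ((t ∘ₗ H) ^ i) (t (H (t y))) := by
        rw [pow_succ, Module.End.mul_apply]; rfl
      rw [hv, pow_succ, mul_neg_one, neg_smul]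
    rw [hXHt, hXy, Finset.sum_range_succ']
    rw [Finset.sum_congr rfl (fun i _ => hterm i)]
    simp only [pow_zero, one_smul, Module.End.one_apply, Finset.sum_neg_distrib]
    abel
  have e1 : ∀ y : N, t (H (X y)) = t y - X y := by
    intro y
    obtain ⟨m, hm⟩ := hnil (t y)
    have hXy : X y = ∑ i ∈ Finset.range m,
        ((-1 : ℤ) ^ i : ℤ) • (((t ∘ₗ H) ^ i) (t y)) := hX y m hm
    have hm1 : ((t ∘ₗ H) ^ (m + 1)) (t y) = 0 := by
      rw [pow_succ', Module.End.mul_apply, hm, map_zero]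
    have hXy1 : X y = ∑ i ∈ Finset.range (m + 1),
        ((-1 : ℤ) ^ i : ℤ) • (((t ∘ₗ H) ^ i) (t y)) := hX y (m + 1) hm1
    have hL : t (H (X y)) = ∑ i ∈ Finset.range m,
        ((-1 : ℤ) ^ i : ℤ) • (((t ∘ₗ H) ^ (i + 1)) (t y)) := by
      rw [hXy, map_sum, map_sum]
      refine Finset.sum_congr rfl (fun i _ => ?_)
      rw [map_zsmul, map_zsmul]
      congr 1
      rw [pow_succ', Module.End.mul_apply]
      rfl
    have hterm : ∀ i : ℕ, ((-1 : ℤ) ^ (i + 1) : ℤ) • (((t ∘ₗ H) ^ (i + 1)) (t y))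
        = -(((-1 : ℤ) ^ i : ℤ) • (((t ∘ₗ H) ^ (i + 1)) (t y))) := by
      intro i; rw [pow_succ, mul_neg_one, neg_smul]
    have hsplit := hXy1
    rw [Finset.sum_range_succ'] at hsplit
    rw [Finset.sum_congr rfl (fun i _ => hterm i)] at hsplit
    simp only [pow_zero, one_smul, Module.End.one_apply, Finset.sum_neg_distrib] at hsplit
    rw [hXy] at hsplit
    rw [hL, hXy]
    linear_combination (norm := abel1) hsplit
  have e1' : ∀ y : N, X y = t y - t (H (X y)) := fun y => by
    rw [e1 y]; abel
  -- the key differential identity e5 : dX + Xd + XGFX = 0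
  have s1 : ∀ y : N, dN (X y) = -t (dN y) - t (G (F (X y))) - t (H (dN (X y))) := by
    intro y
    conv_lhs => rw [e1' y]
    rw [map_sub, h10 y, h10 (H (X y)), h6' (X y), e1 y]
    simp only [map_sub, map_neg, map_add]
    abel
  have hYrec : ∀ y : N, dN (X y) + X (dN y) + X (G (F (X y)))
      = -(t (H (dN (X y) + X (dN y) + X (G (F (X y)))))) := by
    intro y
    conv_lhs => rw [s1 y, e1' (dN y), e1' (G (F (X y)))]
    simp only [map_add, map_sub, map_neg]
    abel
  have hYpow : ∀ (n : ℕ) (y : N), dN (X y) + X (dN y) + X (G (F (X y)))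
      = ((-1 : ℤ) ^ n) • (((t ∘ₗ H) ^ n) (dN (X y) + X (dN y) + X (G (F (X y))))) := by
    intro n
    induction n with
    | zero => intro y; simp
    | succ n ih =>
      intro y
      have aux : ∀ w : N, ((t ∘ₗ H) ^ n) (t (H w)) = ((t ∘ₗ H) ^ (n + 1)) w := by
        intro w; rw [pow_succ, Module.End.mul_apply]; rfl
      have hstep : ((t ∘ₗ H) ^ n) (dN (X y) + X (dN y) + X (G (F (X y))))
          = -(((t ∘ₗ H) ^ (n + 1)) (dN (X y) + X (dN y) + X (G (F (X y))))) := by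
        conv_lhs => rw [hYrec y]
        rw [map_neg, aux]
      calc dN (X y) + X (dN y) + X (G (F (X y)))
          = ((-1 : ℤ) ^ n) • (((t ∘ₗ H) ^ n) (dN (X y) + X (dN y) + X (G (F (X y))))) := ih y
        _ = ((-1 : ℤ) ^ n) • -(((t ∘ₗ H) ^ (n + 1)) (dN (X y) + X (dN y) + X (G (F (X y))))) := by
            rw [hstep]
        _ = ((-1 : ℤ) ^ (n + 1)) • (((t ∘ₗ H) ^ (n + 1)) (dN (X y) + X (dN y) + X (G (F (X y))))) := by
            rw [pow_succ (-1 : ℤ) n, mul_neg_one, neg_smul, smul_neg]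
  have e5 : ∀ y : N, dN (X y) + X (dN y) + X (G (F (X y))) = 0 := by
    intro y
    obtain ⟨m, hm⟩ := hnil (dN (X y) + X (dN y) + X (G (F (X y))))
    have := hYpow m y
    rw [hm, smul_zero] at this
    exact this
  have e5a : ∀ y : N, dN (X y) = -X (dN y) - X (G (F (X y))) := fun y => by
    have h := e5 y
    linear_combination (norm := abel1) h
  refine ⟨?_, ?_, ?_, ?_, ?_, ?_, ?_, ?_⟩
  · -- dMt ∘ dMt = 0
    ext x
    simp only [LinearMap.comp_apply, LinearMap.add_apply, LinearMap.sub_apply,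
      LinearMap.id_apply, LinearMap.zero_apply, map_add, map_sub, map_neg]
    rw [h2 x, h3 (X (G x)), e5a (G x), h4 x]
    simp only [map_add, map_sub, map_neg]
    abel
  · -- dMt ∘ Ft = Ft ∘ (dN + t)
    ext x
    simp only [LinearMap.comp_apply, LinearMap.add_apply, LinearMap.sub_apply,
      LinearMap.id_apply, LinearMap.zero_apply, map_add, map_sub, map_neg]
    rw [h3 x, h3 (X (H x)), e5a (H x), h6' x, e2 x]
    simp only [map_add, map_sub, map_neg]
    abel
  · -- (dN + t) ∘ Gt = Gt ∘ dMt
    ext x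
    simp only [LinearMap.comp_apply, LinearMap.add_apply, LinearMap.sub_apply,
      LinearMap.id_apply, LinearMap.zero_apply, map_add, map_sub, map_neg]
    rw [e1 (G x), h6' (X (G x)), e5a (G x), h4 x]
    simp only [map_add, map_sub, map_neg]
    abel
  · -- Ft ∘ Gt = id
    ext x
    simp only [LinearMap.comp_apply, LinearMap.sub_apply, LinearMap.id_apply,
      map_sub, map_add, map_neg]
    rw [h8 x, h9 (X (G x))]
    simp only [sub_zero, map_zero, map_sub]
    rw [h5 x, h7 (X (G x))]
    abel
  · -- 1 - Gt ∘ Ft = (dN + t) ∘ Ht + Ht ∘ (dN + t)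
    ext x
    simp only [LinearMap.comp_apply, LinearMap.add_apply, LinearMap.sub_apply,
      LinearMap.id_apply, LinearMap.zero_apply, map_add, map_sub, map_neg]
    rw [e1 (H x), e2 x, h6' (X (H x)), e5a (H x), h6' x]
    simp only [map_add, map_sub, map_neg]
    abel
  · -- Ft ∘ Ht = 0
    ext x
    simp only [LinearMap.comp_apply, LinearMap.sub_apply, LinearMap.id_apply,
      LinearMap.zero_apply, map_sub]
    rw [h9 x, h9 (X (H x)), h7 x, h7 (X (H x))]
    simp
  · -- Ht ∘ Gt = 0
    ext x
    simp only [LinearMap.comp_apply, LinearMap.sub_apply, LinearMap.id_apply,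
      LinearMap.zero_apply, map_sub]
    rw [h8 x, h9 (X (G x))]
    simp
  · -- Ht ∘ Ht = 0
    ext x
    simp only [LinearMap.comp_apply, LinearMap.sub_apply, LinearMap.id_apply,
      LinearMap.zero_apply, map_sub]
    rw [h9 x, h9 (X (H x))]
    simp
end

section
/- Iterated perturbation: with the hypotheses of the Basic Perturbation Lemma, if t₁ and t₁ + t₂ are both perturbations of d_N satisfying the nilpotency condition (and t₂ satisfies the nilpotency condition with respect to the homotopy H_{t₁} obtained after perturbing by t₁), then perturbing by t₁ + t₂ in one step gives the same result as perturbing first by t₁ and then by t₂: (d_M)_{t₁+t₂} = ((d_M)_{t₁})_{t₂}, and similarly F_{t₁+t₂} = (F_{t₁})_{t₂}, G_{t₁+t₂} = (G_{t₁})_{t₂}, H_{t₁+t₂} = (H_{t₁})_{t₂}. -/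
-- recursion lemma
lemma Xrec {k : Type*} [Field k] {N : Type*} [AddCommGroup N] [Module k N]
    (t H X : N →ₗ[k] N)
    (hnil : ∀ x : N, ∃ m : ℕ, ((t ∘ₗ H) ^ m) x = 0)
    (hX : ∀ (x : N) (m : ℕ), ((t ∘ₗ H) ^ m) (t x) = 0 →
      X x = ∑ i ∈ Finset.range m, ((-1 : ℤ) ^ i : ℤ) • (((t ∘ₗ H) ^ i) (t x))) :
    X = t - t ∘ₗ H ∘ₗ X := by
  ext x
  obtain ⟨m, hm⟩ := hnil (t x)
  have h0 := hX x m hm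
  have hcomp : (t ∘ₗ H ∘ₗ X) x = (t ∘ₗ H) (X x) := rfl
  simp only [LinearMap.sub_apply, hcomp, h0, map_sum, map_zsmul]
  have step : ∀ i : ℕ, (t ∘ₗ H) (((t ∘ₗ H) ^ i) (t x)) = ((t ∘ₗ H) ^ (i+1)) (t x) := by
    intro i; rw [pow_succ']; rfl
  rw [eq_sub_iff_add_eq]
  calc (∑ i ∈ Finset.range m, ((-1 : ℤ) ^ i : ℤ) • (((t ∘ₗ H) ^ i) (t x)))
        + ∑ i ∈ Finset.range m, ((-1 : ℤ) ^ i : ℤ) • ((t ∘ₗ H) (((t ∘ₗ H) ^ i) (t x)))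
      = (∑ i ∈ Finset.range (m+1), ((-1 : ℤ) ^ i : ℤ) • (((t ∘ₗ H) ^ i) (t x)))
        + ∑ i ∈ Finset.range m, ((-1 : ℤ) ^ i : ℤ) • (((t ∘ₗ H) ^ (i+1)) (t x)) := by
        rw [Finset.sum_range_succ]
        simp only [step, hm, smul_zero, add_zero]
    _ = (∑ i ∈ Finset.range (m+1), ((-1 : ℤ) ^ i : ℤ) • (((t ∘ₗ H) ^ i) (t x)))
        - ∑ i ∈ Finset.range m, ((-1 : ℤ) ^ (i+1) : ℤ) • (((t ∘ₗ H) ^ (i+1)) (t x)) := by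
        rw [sub_eq_add_neg, ← Finset.sum_neg_distrib]
        congr 1
        apply Finset.sum_congr rfl
        intro i _
        rw [pow_succ (-1 : ℤ) i, mul_comm ((-1:ℤ)^i) (-1:ℤ), neg_one_mul, neg_smul, neg_neg]
    _ = t x := by
        rw [Finset.sum_range_succ' (fun i => ((-1 : ℤ) ^ i : ℤ) • (((t ∘ₗ H) ^ i) (t x))) m]
        simp

lemma Xuniq {k : Type*} [Field k] {N : Type*} [AddCommGroup N] [Module k N]
    (t H X X' : N →ₗ[k] N)
    (hnil : ∀ x : N, ∃ m : ℕ, ((t ∘ₗ H) ^ m) x = 0)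
    (h : X = t - t ∘ₗ H ∘ₗ X) (h' : X' = t - t ∘ₗ H ∘ₗ X') : X = X' := by
  have hd : ∀ y : N, X y - X' y = -((t ∘ₗ H) (X y - X' y)) := by
    intro y
    conv_lhs => rw [h, h']
    simp only [LinearMap.sub_apply, LinearMap.comp_apply, map_sub]
    abel
  have key : ∀ (m : ℕ) (y : N), X y - X' y = ((-1 : ℤ) ^ m : ℤ) • (((t ∘ₗ H) ^ m) (X y - X' y)) := by
    intro m
    induction m with
    | zero => intro y; simp
    | succ n ih =>
      intro y
      calc X y - X' y = ((-1:ℤ)^n) • ((t ∘ₗ H) ^ n) (X y - X' y) := ih y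
        _ = ((-1:ℤ)^n) • ((t ∘ₗ H) ^ n) (-((t ∘ₗ H) (X y - X' y))) := by
            conv_lhs => rw [hd y]
        _ = ((-1:ℤ)^(n+1)) • ((t ∘ₗ H) ^ (n+1)) (X y - X' y) := by
            rw [map_neg, smul_neg, pow_succ (-1 : ℤ) n, pow_succ (t ∘ₗ H) n,
              Module.End.mul_apply, mul_neg_one, neg_smul]
  ext x
  obtain ⟨m, hm⟩ := hnil (X x - X' x)
  have := key m x
  rw [hm, smul_zero] at this
  have : X x = X' x := by rw [sub_eq_zero] at this; exact this
  exact this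


lemma Ekey {R : Type*} [Ring R] (t₁ t₂ H X₁ X₂ : R)
    (h1 : t₁ * (H * X₁) = t₁ - X₁)
    (h2 : t₂ * ((H - H * X₁ * H) * X₂) = t₂ - X₂) :
    X₁ + (1 - X₁ * H) * X₂ * (1 - H * X₁) =
      (t₁ + t₂) - (t₁ + t₂) * (H * (X₁ + (1 - X₁ * H) * X₂ * (1 - H * X₁))) := by
  have key : (X₁ + (1 - X₁ * H) * X₂ * (1 - H * X₁)) -
      ((t₁ + t₂) - (t₁ + t₂) * (H * (X₁ + (1 - X₁ * H) * X₂ * (1 - H * X₁)))) =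
      (t₁ * (H * X₁) - (t₁ - X₁)) * (1 - H * X₂ + H * X₂ * H * X₁) +
      (t₂ * ((H - H * X₁ * H) * X₂) - (t₂ - X₂)) * (1 - H * X₁) := by
    noncomm_ring
  rw [h1, h2, sub_self, sub_self, zero_mul, zero_mul, add_zero] at key
  exact sub_eq_zero.mp key

theorem stmt2 {k : Type*} [Field k] [CharZero k]
    {N M : Type*} [AddCommGroup N] [Module k N] [AddCommGroup M] [Module k M]
    (dN : N →ₗ[k] N) (dM : M →ₗ[k] M)
    (hdN : dN ∘ₗ dN = 0) (hdM : dM ∘ₗ dM = 0)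
    (F : N →ₗ[k] M) (G : M →ₗ[k] N) (H : N →ₗ[k] N)
    (hF : dM ∘ₗ F = F ∘ₗ dN) (hG : dN ∘ₗ G = G ∘ₗ dM)
    (hFG : F ∘ₗ G = LinearMap.id)
    (hH : (LinearMap.id : N →ₗ[k] N) - G ∘ₗ F = dN ∘ₗ H + H ∘ₗ dN)
    (hFH : F ∘ₗ H = 0) (hHG : H ∘ₗ G = 0) (hHH : H ∘ₗ H = 0)
    -- the two perturbations
    (t₁ t₂ : N →ₗ[k] N)
    (hd₁ : (dN + t₁) ∘ₗ (dN + t₁) = 0) (hd₁₂ : (dN + t₁ + t₂) ∘ₗ (dN + t₁ + t₂) = 0)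
    (hnil₁ : ∀ x : N, ∃ m : ℕ, ((t₁ ∘ₗ H) ^ m) x = 0)
    (hnil₁₂ : ∀ x : N, ∃ m : ℕ, (((t₁ + t₂) ∘ₗ H) ^ m) x = 0)
    -- X for the perturbation t₁ of (F, G, H)
    (X₁ : N →ₗ[k] N)
    (hX₁ : ∀ (x : N) (m : ℕ), ((t₁ ∘ₗ H) ^ m) (t₁ x) = 0 →
      X₁ x = ∑ i ∈ Finset.range m, ((-1 : ℤ) ^ i : ℤ) • (((t₁ ∘ₗ H) ^ i) (t₁ x)))
    -- X for the perturbation t₁ + t₂ of (F, G, H)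
    (X₁₂ : N →ₗ[k] N)
    (hX₁₂ : ∀ (x : N) (m : ℕ), (((t₁ + t₂) ∘ₗ H) ^ m) ((t₁ + t₂) x) = 0 →
      X₁₂ x = ∑ i ∈ Finset.range m,
        ((-1 : ℤ) ^ i : ℤ) • ((((t₁ + t₂) ∘ₗ H) ^ i) ((t₁ + t₂) x))) :
    -- the contraction perturbed by t₁
    ∀ F₁ : N →ₗ[k] M, ∀ G₁ : M →ₗ[k] N, ∀ H₁ : N →ₗ[k] N, ∀ dM₁ : M →ₗ[k] M,
      F₁ = F ∘ₗ (LinearMap.id - X₁ ∘ₗ H) →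
      G₁ = (LinearMap.id - H ∘ₗ X₁) ∘ₗ G →
      H₁ = H - H ∘ₗ X₁ ∘ₗ H →
      dM₁ = dM + F ∘ₗ X₁ ∘ₗ G →
    -- nilpotency and X for the second perturbation t₂ of (F₁, G₁, H₁)
    (∀ x : N, ∃ m : ℕ, ((t₂ ∘ₗ H₁) ^ m) x = 0) →
    ∀ X₂ : N →ₗ[k] N,
      (∀ (x : N) (m : ℕ), ((t₂ ∘ₗ H₁) ^ m) (t₂ x) = 0 →
        X₂ x = ∑ i ∈ Finset.range m, ((-1 : ℤ) ^ i : ℤ) • (((t₂ ∘ₗ H₁) ^ i) (t₂ x))) →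
      -- conclusion: one-step perturbation by t₁ + t₂ equals the two-step perturbation
      (dM + F ∘ₗ X₁₂ ∘ₗ G = dM₁ + F₁ ∘ₗ X₂ ∘ₗ G₁ ∧
       F ∘ₗ (LinearMap.id - X₁₂ ∘ₗ H) = F₁ ∘ₗ (LinearMap.id - X₂ ∘ₗ H₁) ∧
       (LinearMap.id - H ∘ₗ X₁₂) ∘ₗ G = (LinearMap.id - H₁ ∘ₗ X₂) ∘ₗ G₁ ∧
       H - H ∘ₗ X₁₂ ∘ₗ H = H₁ - H₁ ∘ₗ X₂ ∘ₗ H₁) := by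
  
  intro F₁ G₁ H₁ dM₁ hF₁ hG₁ hH₁ hdM₁ hnil₂ X₂ hX₂
  have r₁ : X₁ = t₁ - t₁ ∘ₗ H ∘ₗ X₁ := Xrec t₁ H X₁ hnil₁ hX₁
  have r₁₂ : X₁₂ = (t₁ + t₂) - (t₁ + t₂) ∘ₗ H ∘ₗ X₁₂ := Xrec (t₁ + t₂) H X₁₂ hnil₁₂ hX₁₂
  have r₂ : X₂ = t₂ - t₂ ∘ₗ H₁ ∘ₗ X₂ := Xrec t₂ H₁ X₂ hnil₂ hX₂
  have h1 : t₁ * (H * X₁) = t₁ - X₁ := by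
    have : t₁ ∘ₗ H ∘ₗ X₁ = t₁ - X₁ := by
      conv_rhs => rw [r₁, sub_sub_cancel]
    exact this
  have h2 : t₂ * ((H - H * X₁ * H) * X₂) = t₂ - X₂ := by
    have e : (H - H * X₁ * H : N →ₗ[k] N) = H₁ := by
      rw [hH₁]; rfl
    rw [e]
    have : t₂ ∘ₗ H₁ ∘ₗ X₂ = t₂ - X₂ := by
      conv_rhs => rw [r₂, sub_sub_cancel]
    exact this
  have key := Ekey t₁ t₂ H X₁ X₂ h1 h2
  set E : N →ₗ[k] N := X₁ + (1 - X₁ * H) * X₂ * (1 - H * X₁) with hEdef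
  have rE : E = (t₁ + t₂) - (t₁ + t₂) ∘ₗ H ∘ₗ E := key
  have hE : X₁₂ = E := Xuniq (t₁ + t₂) H X₁₂ E hnil₁₂ r₁₂ rE
  have hEc : X₁₂ = X₁ + (LinearMap.id - X₁ ∘ₗ H) ∘ₗ X₂ ∘ₗ (LinearMap.id - H ∘ₗ X₁) := by
    rw [hE, hEdef]; rfl
  subst hF₁ hG₁ hH₁ hdM₁
  refine ⟨?_, ?_, ?_, ?_⟩ <;>
  · rw [hEc]
    ext x
    simp only [LinearMap.add_apply, LinearMap.sub_apply, LinearMap.comp_apply,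
      LinearMap.id_apply, map_sub, map_add]
    abel
end

section
/- The boundary operator ∂ on the cellular chain complex C_*(P_n) of the permutahedron, given on an ordered partition ψ = [ψ₁|…|ψ_d] by ∂[ψ₁|…|ψ_d] = Σ_{1≤k≤d, ∅ ≠ M ⊊ ψ_k} (−1)^{m₁+…+m_{k−1}+(k−1)+#M} (−1)^{σ_M} [ψ₁|…|ψ_{k−1}|M|ψ_k∖M|ψ_{k+1}|…|ψ_d], satisfies ∂² = 0. Here m_i = #ψ_i and σ_M is the sign of the unshuffle permutation taking ψ_k (in increasing order) to the concatenation [M | ψ_k∖M] (each in increasing order). -/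
open Finset

noncomputable section

variable (K : Type*) [Field K] [CharZero K] (n : ℕ)

/-- Ordered partitions of `{1,…,n}`, encoded as lists of nonempty pairwise disjoint
subsets of `Fin n` covering everything; a partition with `d` parts spans the cellular
chain complex `C_*(P_n)` of the permutahedron in degree `-(n-d)`. -/
def IsOP (l : List (Finset (Fin n))) : Prop :=
  (∀ s ∈ l, s ≠ ∅) ∧ l.Pairwise Disjoint ∧ ∀ x : Fin n, ∃ s ∈ l, x ∈ s

/-- The cellular boundary operator of the permutahedron on the free module spanned by
(lists of subsets encoding) ordered partitions:
`∂[ψ₁|…|ψ_d] = Σ_{k, ∅≠M⊊ψ_k} (-1)^{m₁+…+m_{k-1}+(k-1)+#M} (-1)^{σ_M}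
[ψ₁|…|M|ψ_k∖M|…|ψ_d]`, where `σ_M` is the unshuffle sign, realized as the parity of the
number of pairs `(a, b)` with `a ∈ M`, `b ∈ ψ_k ∖ M`, `b < a`. -/
def permBd : (List (Finset (Fin n)) →₀ K) →ₗ[K] (List (Finset (Fin n)) →₀ K) :=
  Finsupp.lsum K fun l =>
    ∑ j ∈ Finset.range l.length,
      ∑ M ∈ (l.getD j ∅).powerset.filter (fun M => M ≠ ∅ ∧ M ≠ l.getD j ∅),
        ((-1 : K) ^ (((l.take j).map Finset.card).sum + j + M.card +
            ∑ a ∈ M, (((l.getD j ∅) \ M).filter (· < a)).card)) •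
          Finsupp.lsingle (l.take j ++ [M, (l.getD j ∅) \ M] ++ l.drop (j + 1))

/-!
The operator `∂` is a derivation with respect to concatenation of blocks: passing a block `S`
costs the Koszul sign `(-1)^(#S+1)`, and on a single block `∂[S] = Σ ± [M | S∖M]`.
Consequently `∂²` commutes with prepending a block as soon as `∂²[S] = 0` for every block `S`,
and `∂²` kills the empty partition, so `∂² = 0` by induction on the number of blocks.
The vanishing of `∂²[S]` is a sign computation: each decomposition `S = A ⊔ B ⊔ C` into three
nonempty blocks arises once by splitting `A ∪ B` off `S` and then `A` off `A ∪ B`, and once by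
splitting `A` off `S` and then `B` off `S ∖ A`; additivity of the inversion count shows that the
two signs are opposite.
-/

theorem LinearMap.sum_comp {R M N P ι : Type*} [Semiring R] [AddCommMonoid M]
    [AddCommMonoid N] [AddCommMonoid P] [Module R M] [Module R N] [Module R P]
    (s : Finset ι) (f : ι → N →ₗ[R] P) (g : M →ₗ[R] N) :
    (∑ i ∈ s, f i) ∘ₗ g = ∑ i ∈ s, f i ∘ₗ g :=
  LinearMap.ext fun x => by simp

theorem LinearMap.comp_sum {R M N P ι : Type*} [Semiring R] [AddCommMonoid M]
    [AddCommMonoid N] [AddCommMonoid P] [Module R M] [Module R N] [Module R P]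
    (s : Finset ι) (g : N →ₗ[R] P) (f : ι → M →ₗ[R] N) :
    g ∘ₗ (∑ i ∈ s, f i) = ∑ i ∈ s, g ∘ₗ f i :=
  LinearMap.ext fun x => by simp

namespace Permutahedron

section Subsets

variable {α : Type*} [DecidableEq α]

def nontrivialSubsets (S : Finset α) : Finset (Finset α) :=
  S.powerset.filter fun M => M ≠ ∅ ∧ M ≠ S

lemma mem_nontrivialSubsets {S M : Finset α} :
    M ∈ nontrivialSubsets S ↔ M ⊆ S ∧ M ≠ ∅ ∧ M ≠ S := by
  simp [nontrivialSubsets]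

lemma sum_nontrivialSubsets_sdiff {β : Type*} [AddCommMonoid β] {S A : Finset α} (hA : A ⊆ S)
    (g : Finset α → β) :
    ∑ B ∈ nontrivialSubsets (S \ A), g B =
      ∑ M ∈ (nontrivialSubsets S).filter (A ⊂ ·), g (M \ A) := by
  refine sum_nbij' (A ∪ ·) (· \ A) ?_ ?_ ?_ ?_ ?_ <;> intro X hX <;>
    simp only [mem_filter, mem_nontrivialSubsets] at hX ⊢
  · simp only [subset_iff, ssubset_iff_subset_ne, Ne, Finset.ext_iff, mem_union, mem_sdiff] at *
    grind
  · simp only [subset_iff, ssubset_iff_subset_ne, Ne, Finset.ext_iff, mem_sdiff] at *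
    grind
  · exact union_sdiff_cancel_left (disjoint_of_subset_right hX.1 disjoint_sdiff)
  · exact union_sdiff_of_subset hX.2.subset
  · rw [union_sdiff_cancel_left (disjoint_of_subset_right hX.1 disjoint_sdiff)]

end Subsets

section Signs

variable {α : Type*} [LinearOrder α] (R : Type*) [CommRing R]

def unshuffleInv (M T : Finset α) : ℕ := ∑ a ∈ M, #(T.filter (· < a))

lemma unshuffleInv_union_left {A B : Finset α} (h : Disjoint A B) (T : Finset α) :
    unshuffleInv (A ∪ B) T = unshuffleInv A T + unshuffleInv B T :=
  sum_union h

lemma unshuffleInv_union_right (M : Finset α) {A B : Finset α} (h : Disjoint A B) :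
    unshuffleInv M (A ∪ B) = unshuffleInv M A + unshuffleInv M B := by
  rw [unshuffleInv, unshuffleInv, unshuffleInv, ← sum_add_distrib]
  refine sum_congr rfl fun a _ => ?_
  rw [filter_union, card_union_of_disjoint (disjoint_filter_filter h)]

def splitSign (S M : Finset α) : R := (-1) ^ (#M + unshuffleInv M (S \ M))

lemma splitSign_mul_splitSign {S M A : Finset α} (hAM : A ⊆ M) (hMS : M ⊆ S) :
    splitSign R S M * splitSign R M A =
      -(splitSign R S A * ((-1) ^ (#A + 1) * splitSign R (S \ A) (M \ A))) := by
  have hM : unshuffleInv M (S \ M) = unshuffleInv A (S \ M) + unshuffleInv (M \ A) (S \ M) := by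
    rw [← unshuffleInv_union_left disjoint_sdiff, union_sdiff_of_subset hAM]
  have hSA : unshuffleInv A (S \ A) = unshuffleInv A (S \ M) + unshuffleInv A (M \ A) := by
    rw [← sdiff_union_sdiff_cancel hMS hAM,
      unshuffleInv_union_right _ (disjoint_sdiff_self_left.mono_right sdiff_subset)]
  have hcard : #(M \ A) + #A = #M := card_sdiff_add_card_eq_card hAM
  simp only [splitSign, sdiff_sdiff_sdiff_cancel_right hAM, ← pow_add]
  rw [hM, hSA, ← hcard, pow_add]
  ring

variable {R} in
theorem sum_split_left_add_split_right_eq_zero {N : Type*} [AddCommGroup N] [Module R N]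
    (f : Finset α → Finset α → Finset α → N) (S : Finset α) :
    ∑ M ∈ nontrivialSubsets S, splitSign R S M •
      (∑ A ∈ nontrivialSubsets M, splitSign R M A • f A (M \ A) (S \ M) +
        (-1 : R) ^ (#M + 1) •
          ∑ B ∈ nontrivialSubsets (S \ M), splitSign R (S \ M) B • f M B ((S \ M) \ B)) = 0 := by
  simp only [smul_add, sum_add_distrib, smul_sum, smul_smul]
  rw [sum_comm' (t' := nontrivialSubsets S) (s' := fun A => (nontrivialSubsets S).filter (A ⊂ ·))
    (by intro M A; simp only [mem_filter, mem_nontrivialSubsets]; grind)]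
  rw [sum_congr rfl fun A hA =>
    sum_nontrivialSubsets_sdiff (mem_nontrivialSubsets.mp hA).1 _, ← sum_add_distrib]
  refine sum_eq_zero fun A _ => ?_
  rw [← sum_add_distrib]
  refine sum_eq_zero fun M hM => ?_
  obtain ⟨hM, hAM⟩ := mem_filter.mp hM
  rw [sdiff_sdiff_sdiff_cancel_right hAM.subset,
    splitSign_mul_splitSign R hAM.subset (mem_nontrivialSubsets.mp hM).1, neg_smul, neg_add_cancel]

end Signs

section Prepend

variable {α : Type*} (R : Type*) [Semiring R]

def prepend (l : List (Finset α)) : (List (Finset α) →₀ R) →ₗ[R] (List (Finset α) →₀ R) :=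
  Finsupp.lmapDomain R R (l ++ ·)

lemma prepend_single (l m : List (Finset α)) (r : R) :
    prepend R l (Finsupp.single m r) = Finsupp.single (l ++ m) r :=
  Finsupp.mapDomain_single

lemma prepend_comp_prepend (l₁ l₂ : List (Finset α)) :
    prepend R l₁ ∘ₗ prepend R l₂ = prepend R (l₁ ++ l₂) := by
  ext
  simp [prepend_single]

end Prepend

section SplitBlock

variable {α : Type*} [LinearOrder α] (R : Type*) [CommRing R]

def splitBlock (S : Finset α) : (List (Finset α) →₀ R) →ₗ[R] (List (Finset α) →₀ R) :=
  ∑ M ∈ nontrivialSubsets S, splitSign R S M • prepend R [M, S \ M]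

lemma splitBlock_comp_prepend (S : Finset α) (l : List (Finset α)) :
    splitBlock R S ∘ₗ prepend R l =
      ∑ M ∈ nontrivialSubsets S, splitSign R S M • prepend R (M :: (S \ M) :: l) := by
  simp only [splitBlock, LinearMap.sum_comp, LinearMap.smul_comp, prepend_comp_prepend]
  rfl

lemma prepend_comp_splitBlock (l : List (Finset α)) (T : Finset α) :
    prepend R l ∘ₗ splitBlock R T =
      ∑ B ∈ nontrivialSubsets T, splitSign R T B • prepend R (l ++ [B, T \ B]) := by
  simp only [splitBlock, LinearMap.comp_sum, LinearMap.comp_smul, prepend_comp_prepend]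

end SplitBlock

section Boundary

variable {F : Type*} [Field F] {n}

lemma permBd_comp_prepend_singleton (S : Finset (Fin n)) :
    permBd F n ∘ₗ prepend F [S] =
      splitBlock F S + (-1 : F) ^ (#S + 1) • (prepend F [S] ∘ₗ permBd F n) := by
  refine Finsupp.lhom_ext' fun l => LinearMap.ext_ring ?_
  simp only [LinearMap.comp_apply, Finsupp.lsingle_apply, prepend_single, LinearMap.add_apply,
    LinearMap.smul_apply, permBd, Finsupp.lsum_single, LinearMap.coe_sum, Finset.sum_apply,
    map_sum, map_smul, List.singleton_append, List.length_cons]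
  rw [sum_range_succ', add_comm]
  congr 1
  · simp [splitBlock, prepend_single, splitSign, unshuffleInv, nontrivialSubsets]
  · rw [smul_sum]
    refine sum_congr rfl fun j _ => ?_
    rw [smul_sum]
    refine sum_congr rfl fun M _ => ?_
    simp only [List.take_succ_cons, List.getD_cons_succ, List.drop_succ_cons, List.map_cons,
      List.sum_cons, List.cons_append, smul_smul, ← pow_add]
    congr 2
    ring

lemma permBd_comp_prepend_pair (M T : Finset (Fin n)) :
    permBd F n ∘ₗ prepend F [M, T] =
      splitBlock F M ∘ₗ prepend F [T] + (-1 : F) ^ (#M + 1) • (prepend F [M] ∘ₗ splitBlock F T) +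
        (-1 : F) ^ (#M + #T) • (prepend F [M, T] ∘ₗ permBd F n) := by
  have hMT : prepend F [M, T] = prepend F [M] ∘ₗ prepend F [T] :=
    (prepend_comp_prepend F [M] [T]).symm
  conv_lhs => rw [hMT]
  rw [← LinearMap.comp_assoc, permBd_comp_prepend_singleton,
    LinearMap.add_comp, LinearMap.smul_comp, LinearMap.comp_assoc, permBd_comp_prepend_singleton,
    LinearMap.comp_add, LinearMap.comp_smul, ← LinearMap.comp_assoc, smul_add, smul_smul, ← pow_add,
    show #M + 1 + (#T + 1) = #M + #T + 2 by ring, pow_add (-1 : F) (#M + #T) 2, neg_one_sq,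
    mul_one, ← hMT, add_assoc]

lemma permBd_comp_splitBlock (S : Finset (Fin n)) :
    permBd F n ∘ₗ splitBlock F S = (-1 : F) ^ #S • (splitBlock F S ∘ₗ permBd F n) := by
  calc permBd F n ∘ₗ splitBlock F S
      = ∑ M ∈ nontrivialSubsets S, splitSign F S M • (permBd F n ∘ₗ prepend F [M, S \ M]) := by
        simp only [splitBlock, LinearMap.comp_sum, LinearMap.comp_smul]
    _ = ∑ M ∈ nontrivialSubsets S, splitSign F S M •
          (∑ A ∈ nontrivialSubsets M, splitSign F M A • prepend F [A, M \ A, S \ M] +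
            (-1 : F) ^ (#M + 1) • ∑ B ∈ nontrivialSubsets (S \ M),
              splitSign F (S \ M) B • prepend F [M, B, (S \ M) \ B]) +
        ∑ M ∈ nontrivialSubsets S,
          splitSign F S M • ((-1 : F) ^ #S • (prepend F [M, S \ M] ∘ₗ permBd F n)) := by
        rw [← sum_add_distrib]
        refine sum_congr rfl fun M hM => ?_
        have hcard : #M + #(S \ M) = #S :=
          (add_comm _ _).trans (card_sdiff_add_card_eq_card (mem_nontrivialSubsets.mp hM).1)
        rw [permBd_comp_prepend_pair, splitBlock_comp_prepend, prepend_comp_splitBlock, hcard,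
          smul_add]
        rfl
    _ = (-1 : F) ^ #S • (splitBlock F S ∘ₗ permBd F n) := by
        rw [sum_split_left_add_split_right_eq_zero (fun A B C => prepend F [A, B, C]) S, zero_add,
          splitBlock, LinearMap.sum_comp, smul_sum]
        simp only [LinearMap.smul_comp, smul_comm ((-1 : F) ^ #S)]

lemma permBd_comp_permBd_comp_prepend_singleton (S : Finset (Fin n)) :
    (permBd F n ∘ₗ permBd F n) ∘ₗ prepend F [S] = prepend F [S] ∘ₗ (permBd F n ∘ₗ permBd F n) := by
  rw [LinearMap.comp_assoc, permBd_comp_prepend_singleton, LinearMap.comp_add, LinearMap.comp_smul,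
    permBd_comp_splitBlock, ← LinearMap.comp_assoc, permBd_comp_prepend_singleton,
    LinearMap.add_comp, LinearMap.smul_comp, smul_add, smul_smul, ← pow_add, ← add_assoc,
    ← add_smul, pow_succ (n := #S), mul_neg_one, add_neg_cancel, zero_smul, zero_add, ← two_mul,
    pow_mul, neg_one_sq, one_pow, one_smul, LinearMap.comp_assoc]

theorem permBd_comp_permBd : permBd F n ∘ₗ permBd F n = 0 := by
  refine Finsupp.lhom_ext' fun l => LinearMap.ext_ring ?_
  induction l with
  | nil => simp [permBd]
  | cons S l ih =>
    have h := LinearMap.congr_fun (permBd_comp_permBd_comp_prepend_singleton (F := F) S)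
      (Finsupp.single l 1)
    simp only [LinearMap.comp_apply, Finsupp.lsingle_apply, LinearMap.zero_apply] at ih ⊢
    simp only [LinearMap.comp_apply, prepend_single, List.singleton_append] at h
    rw [h, ih, map_zero]

end Boundary

end Permutahedron

theorem stmt4 :
    ∀ l : List (Finset (Fin n)), IsOP n l →
      permBd K n (permBd K n (Finsupp.single l 1)) = 0 :=
  fun l _ => LinearMap.congr_fun Permutahedron.permBd_comp_permBd (Finsupp.single l 1)
end
end
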